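/- arXiv:1512.06699 — 6 statements merged into one kernel-verified Lean document; each statement's English description precedes it below -/
import Mathlib

section
/- For every n ≥ 0 and every symmetric integral polytope P in ℝ^n, there exist integral polytopes Q and R in ℝ^n such that P + Q + (-Q) = R + (-R) (Minkowski sums). Equivalently, in the Grothendieck group of the monoid of integral polytopes under Minkowski sum, every symmetric element is a norm: 𝔊^sym(n) = 𝔊^norm(n). -/
/-!
Add the points `0, ±v₁, …, ±v_k` one pair at a time. If `C = conv S` with `0 ∈ S = -S` and
`A = conv (S ∪ {v})`, then `-A = conv (S ∪ {-v})`, `A ∪ -A = conv (S ∪ {±v})` and `A ∩ -A = C`.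
Since `A + B = (A ∪ B) + (A ∩ B)` for closed `A`, `B` with convex union, this gives
`A + (-A) = conv (S ∪ {±v}) + C`. So `C + Q + (-Q) = R + (-R)` implies
`conv (S ∪ {±v}) + R + (-R) = (A + Q) + -(A + Q)`, and the induction closes.
-/

open Pointwise

/-- An integral polytope in `ℝ^n`: the convex hull of a nonempty finite set of
points all of whose coordinates are integers. -/
def IsIntegralPolytope {n : ℕ} (P : Set (Fin n → ℝ)) : Prop :=
  ∃ S : Finset (Fin n → ℝ), S.Nonempty ∧ (∀ x ∈ S, ∀ i, ∃ m : ℤ, x i = (m : ℝ)) ∧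
    P = convexHull ℝ (S : Set (Fin n → ℝ))

section ConvexHullInsert

variable {E : Type*} [AddCommGroup E] [Module ℝ E]

theorem Convex.smul_add_smul_mem_of_zero_mem {K : Set E} (hK : Convex ℝ K) (h0 : (0 : E) ∈ K)
    {x y : E} (hx : x ∈ K) (hy : y ∈ K) {a b : ℝ} (ha : 0 ≤ a) (hb : 0 ≤ b) (hab : a + b ≤ 1) :
    a • x + b • y ∈ K := by
  rcases (add_nonneg ha hb).eq_or_lt with hs | hs
  · obtain ⟨rfl, rfl⟩ : a = 0 ∧ b = 0 := ⟨by linarith, by linarith⟩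
    simpa using h0
  have hp : (a / (a + b)) • x + (b / (a + b)) • y ∈ K :=
    hK hx hy (by positivity) (by positivity) (by field_simp)
  convert hK.smul_mem_of_zero_mem h0 hp ⟨hs.le, hab⟩ using 1
  rw [smul_add, smul_smul, smul_smul, mul_div_cancel₀ _ hs.ne', mul_div_cancel₀ _ hs.ne']

theorem add_sub_mem_segment {a b p : E} (hp : p ∈ segment ℝ a b) :
    a + b - p ∈ segment ℝ a b := by
  obtain ⟨s, t, hs, ht, hst, rfl⟩ := hp
  exact ⟨t, s, ht, hs, by linarith, by linear_combination (norm := module) hst • (a + b)⟩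

theorem mem_convexHull_insert_iff {S : Set E} (hS : S.Nonempty) {v x : E} :
    x ∈ convexHull ℝ (insert v S) ↔
      ∃ c ∈ convexHull ℝ S, ∃ t ∈ Set.Icc (0 : ℝ) 1, x = t • v + (1 - t) • c := by
  rw [convexHull_insert hS, convexJoin_singleton_left]
  simp only [Set.mem_iUnion, exists_prop]
  refine exists_congr fun c => and_congr_right fun _ => ⟨?_, ?_⟩
  · rintro ⟨a, b, ha, hb, hab, rfl⟩
    exact ⟨a, ⟨ha, by linarith⟩, by rw [← hab, add_sub_cancel_left]⟩
  · rintro ⟨t, ⟨ht0, ht1⟩, rfl⟩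
    exact ⟨t, 1 - t, ht0, by linarith, by ring, rfl⟩

theorem smul_add_smul_mem_convexHull_insert {S : Set E} (h0 : (0 : E) ∈ S) (w : E) {c : E}
    (hc : c ∈ convexHull ℝ S) {a b : ℝ} (ha : 0 ≤ a) (hb : 0 ≤ b) (hab : a + b ≤ 1) :
    a • w + b • c ∈ convexHull ℝ (insert w S) :=
  (convex_convexHull ℝ _).smul_add_smul_mem_of_zero_mem
    (subset_convexHull ℝ _ (Set.mem_insert_of_mem w h0))
    (subset_convexHull ℝ _ (Set.mem_insert w S))
    (convexHull_mono (Set.subset_insert w S) hc) ha hb hab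

theorem convexHull_insert_inter_convexHull_insert_neg {S : Set E} (h0 : (0 : E) ∈ S) (v : E) :
    convexHull ℝ (insert v S) ∩ convexHull ℝ (insert (-v) S) = convexHull ℝ S := by
  refine subset_antisymm ?_ (Set.subset_inter (convexHull_mono (Set.subset_insert _ _))
    (convexHull_mono (Set.subset_insert _ _)))
  rintro x ⟨hxv, hxnv⟩
  obtain ⟨c, hc, t, ⟨ht0, ht1⟩, rfl⟩ := (mem_convexHull_insert_iff ⟨0, h0⟩).1 hxv
  obtain ⟨c', hc', u, ⟨hu0, hu1⟩, hx⟩ := (mem_convexHull_insert_iff ⟨0, h0⟩).1 hxnv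
  rcases (add_nonneg ht0 hu0).eq_or_lt with hs | hs
  · obtain rfl : t = 0 := by linarith
    simpa using hc
  -- averaging the two representations with weights `u` and `t` cancels `v`
  have hsx :
      (t + u) • (t • v + (1 - t) • c) = (u * (1 - t)) • c + (t * (1 - u)) • c' := by
    linear_combination (norm := module) t • hx
  have hx' : t • v + (1 - t) • c =
      (u * (1 - t) / (t + u)) • c + (t * (1 - u) / (t + u)) • c' := by
    rw [← inv_smul_smul₀ hs.ne' (t • v + (1 - t) • c), hsx]
    module
  rw [hx']
  refine (convex_convexHull ℝ S).smul_add_smul_mem_of_zero_mem (subset_convexHull ℝ S h0) hc hc'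
    (by positivity) (by positivity) ?_
  rw [← add_div, div_le_one hs]
  nlinarith

theorem convexHull_insert_union_convexHull_insert_neg {S : Set E} (h0 : (0 : E) ∈ S) (v : E) :
    convexHull ℝ (insert v S) ∪ convexHull ℝ (insert (-v) S) =
      convexHull ℝ (insert v (insert (-v) S)) := by
  refine subset_antisymm (Set.union_subset
    (convexHull_mono (Set.insert_subset_insert (Set.subset_insert _ _)))
    (convexHull_mono (Set.subset_insert _ _))) fun x hx => ?_
  obtain ⟨b, hb, t, ⟨ht0, ht1⟩, rfl⟩ :=
    (mem_convexHull_insert_iff (Set.insert_nonempty _ _)).1 hx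
  obtain ⟨c, hc, u, ⟨hu0, hu1⟩, rfl⟩ := (mem_convexHull_insert_iff ⟨0, h0⟩).1 hb
  have hd : t • v + (1 - t) • (u • -v + (1 - u) • c) =
      (t - (1 - t) * u) • v + ((1 - t) * (1 - u)) • c := by module
  rcases le_total 0 (t - (1 - t) * u) with hd0 | hd0
  · left
    rw [hd]
    exact smul_add_smul_mem_convexHull_insert h0 v hc hd0 (by nlinarith) (by nlinarith)
  · right
    rw [hd, ← neg_smul_neg]
    exact smul_add_smul_mem_convexHull_insert h0 (-v) hc (by linarith) (by nlinarith)
      (by nlinarith)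

theorem convexHull_insert_zero_union_neg {S : Set E} (hS : S.Nonempty)
    (hsymm : -convexHull ℝ S = convexHull ℝ S) :
    convexHull ℝ (insert 0 (S ∪ -S)) = convexHull ℝ S := by
  have hneg : -S ⊆ convexHull ℝ S := hsymm ▸ Set.neg_subset_neg.2 (subset_convexHull ℝ S)
  have h0 : (0 : E) ∈ convexHull ℝ S := by
    obtain ⟨s, hs⟩ := hS
    convert convex_convexHull ℝ S (subset_convexHull ℝ S hs) (hneg (Set.neg_mem_neg.2 hs))
      (by norm_num : (0 : ℝ) ≤ 1 / 2) (by norm_num : (0 : ℝ) ≤ 1 / 2) (by norm_num) using 1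
    module
  refine subset_antisymm ?_
    (convexHull_mono (Set.subset_union_left.trans (Set.subset_insert _ _)))
  exact convexHull_min (Set.insert_subset h0 (Set.union_subset (subset_convexHull ℝ S) hneg))
    (convex_convexHull ℝ S)

end ConvexHullInsert

section Minkowski

variable {E : Type*} [AddCommGroup E] [Module ℝ E] [TopologicalSpace E] [IsTopologicalAddGroup E]
  [ContinuousSMul ℝ E]

-- the segment from `a ∈ A` to `b ∈ B` is connected, so it meets `A ∩ B` in some `p`,
-- and `a + b = (a + b - p) + p` with `a + b - p` on the same segment
theorem add_eq_union_add_inter {A B : Set E} (hA : IsClosed A) (hB : IsClosed B)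
    (hAB : Convex ℝ (A ∪ B)) : A + B = (A ∪ B) + (A ∩ B) := by
  refine subset_antisymm ?_ ?_
  · rintro _ ⟨a, ha, b, hb, rfl⟩
    have hseg := hAB.segment_subset (Or.inl ha) (Or.inr hb)
    obtain ⟨p, hp, hpAB⟩ := isPreconnected_closed_iff.1 (convex_segment a b).isPreconnected A B
      hA hB hseg ⟨a, left_mem_segment ℝ a b, ha⟩ ⟨b, right_mem_segment ℝ a b, hb⟩
    exact ⟨a + b - p, hseg (add_sub_mem_segment hp), p, hpAB, sub_add_cancel _ _⟩
  · rintro _ ⟨p, hA | hB, q, ⟨hqA, hqB⟩, rfl⟩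
    · exact ⟨p, hA, q, hqB, rfl⟩
    · exact ⟨q, hqA, p, hB, add_comm q p⟩

theorem convexHull_insert_add_neg [T2Space E] {S : Set E} (hS : S.Finite) (h0 : (0 : E) ∈ S)
    (hsymm : -S = S) (v : E) :
    convexHull ℝ (insert v S) + -convexHull ℝ (insert v S) =
      convexHull ℝ (insert v (insert (-v) S)) + convexHull ℝ S := by
  have hneg : -convexHull ℝ (insert v S) = convexHull ℝ (insert (-v) S) := by
    rw [← convexHull_neg, Set.neg_insert, hsymm]
  have hclosed (w : E) : IsClosed (convexHull ℝ (insert w S)) :=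
    (hS.insert w).isCompact_convexHull (𝕜 := ℝ) |>.isClosed
  have hunion := convexHull_insert_union_convexHull_insert_neg h0 v
  rw [hneg, add_eq_union_add_inter (hclosed v) (hclosed (-v)) (hunion ▸ convex_convexHull ℝ _),
    hunion, convexHull_insert_inter_convexHull_insert_neg h0 v]

end Minkowski

section IntegralPolytope

variable {n : ℕ}

def integerPoints (n : ℕ) : AddSubgroup (Fin n → ℝ) where
  carrier := {x | ∀ i, ∃ m : ℤ, x i = m}
  add_mem' {x y} hx hy i := by
    obtain ⟨a, ha⟩ := hx i
    obtain ⟨b, hb⟩ := hy i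
    exact ⟨a + b, by simp [ha, hb]⟩
  zero_mem' i := ⟨0, by simp⟩
  neg_mem' {x} hx i := by
    obtain ⟨a, ha⟩ := hx i
    exact ⟨-a, by simp [ha]⟩

theorem isIntegralPolytope_convexHull {S : Set (Fin n → ℝ)} (hfin : S.Finite) (hne : S.Nonempty)
    (hS : S ⊆ integerPoints n) : IsIntegralPolytope (convexHull ℝ S) :=
  ⟨hfin.toFinset, hfin.toFinset_nonempty.2 hne, fun x hx => hS (hfin.mem_toFinset.1 hx),
    by rw [hfin.coe_toFinset]⟩

theorem IsIntegralPolytope.add {P Q : Set (Fin n → ℝ)} (hP : IsIntegralPolytope P)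
    (hQ : IsIntegralPolytope Q) : IsIntegralPolytope (P + Q) := by
  obtain ⟨S, hSne, hS, rfl⟩ := hP
  obtain ⟨T, hTne, hT, rfl⟩ := hQ
  rw [← convexHull_add]
  refine isIntegralPolytope_convexHull (S.finite_toSet.add T.finite_toSet)
    (hSne.to_set.add hTne.to_set) ?_
  rintro _ ⟨x, hx, y, hy, rfl⟩
  exact add_mem (hS x hx) (hT y hy)

theorem exists_add_neg_eq_add_neg {T : Set (Fin n → ℝ)} (hfin : T.Finite)
    (hT : T ⊆ integerPoints n) :
    ∃ Q R : Set (Fin n → ℝ), IsIntegralPolytope Q ∧ IsIntegralPolytope R ∧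
      convexHull ℝ (insert 0 (T ∪ -T)) + Q + -Q = R + -R := by
  induction T, hfin using Set.Finite.induction_on with
  | empty =>
    have h0 : IsIntegralPolytope ({0} : Set (Fin n → ℝ)) := by
      simpa using isIntegralPolytope_convexHull (Set.finite_singleton 0)
        (Set.singleton_nonempty 0) (by simp)
    exact ⟨{0}, {0}, h0, h0, by simp⟩
  | @insert v T _ hfin ih =>
    obtain ⟨hv, hTint⟩ := Set.insert_subset_iff.1 hT
    obtain ⟨Q, R, hQ, hR, hQR⟩ := ih hTint
    set S := insert 0 (T ∪ -T)
    have hSfin : S.Finite := (hfin.union hfin.neg).insert 0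
    have hS0 : (0 : Fin n → ℝ) ∈ S := Set.mem_insert 0 _
    have hSsymm : -S = S := by
      rw [Set.neg_insert, Set.union_neg, neg_neg, neg_zero, Set.union_comm]
    have hSint : S ⊆ integerPoints n := Set.insert_subset (zero_mem _)
      (Set.union_subset hTint fun x hx => by simpa using neg_mem (hTint hx))
    have hinsert : insert 0 (insert v T ∪ -insert v T) = insert v (insert (-v) S) := by
      rw [Set.neg_insert, Set.insert_union, Set.union_insert, Set.insert_comm 0 v,
        Set.insert_comm 0 (-v)]
    set A := convexHull ℝ (insert v S)
    have hA : IsIntegralPolytope A := isIntegralPolytope_convexHull (hSfin.insert v)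
      (Set.insert_nonempty v S) (Set.insert_subset hv hSint)
    refine ⟨R, A + Q, hR, hA.add hQ, ?_⟩
    rw [hinsert]
    calc convexHull ℝ (insert v (insert (-v) S)) + R + -R
        = convexHull ℝ (insert v (insert (-v) S)) + (convexHull ℝ S + Q + -Q) := by
          rw [add_assoc, hQR]
      _ = (convexHull ℝ (insert v (insert (-v) S)) + convexHull ℝ S) + (Q + -Q) := by
          simp only [add_assoc]
      _ = (A + -A) + (Q + -Q) := by rw [convexHull_insert_add_neg hSfin hS0 hSsymm v]
      _ = A + Q + -(A + Q) := by rw [neg_add_rev, add_add_add_comm, add_comm (-A)]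

end IntegralPolytope

/-- Every symmetric integral polytope is a norm in the Grothendieck group of the
monoid of integral polytopes under Minkowski sum. -/
theorem symmetric_is_norm_in_grothendieck_group (n : ℕ) (P : Set (Fin n → ℝ))
    (hP : IsIntegralPolytope P) (hsym : P = -P) :
    ∃ Q R : Set (Fin n → ℝ), IsIntegralPolytope Q ∧ IsIntegralPolytope R ∧
      P + Q + (-Q) = R + (-R) := by
  obtain ⟨S, hSne, hS, rfl⟩ := hP
  rw [← convexHull_insert_zero_union_neg hSne.to_set hsym.symm]
  exact exists_add_neg_eq_add_neg S.finite_toSet hS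
end

section
/- For every n ≥ 2 there exists a symmetric integral polytope P in ℝ^n that is not an integral norm, i.e., there is no integral polytope Q in ℝ^n with P = Q + (-Q). -/
open Pointwise

private lemma hull_linear_le {n : ℕ} (f : (Fin n → ℝ) →ₗ[ℝ] ℝ) (V : Set (Fin n → ℝ))
    (c : ℝ) (h : ∀ v ∈ V, f v ≤ c) : ∀ x ∈ convexHull ℝ V, f x ≤ c := fun x hx =>
  convexHull_min h (convex_halfSpace_le f.isLinear c) hx

/-- For every `n ≥ 2` there is a symmetric integral polytope in `ℝ^n` that is not
an integral norm. -/
theorem exists_symmetric_not_norm (n : ℕ) (hn : 2 ≤ n) :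
    ∃ P : Set (Fin n → ℝ), IsIntegralPolytope P ∧ P = -P ∧
      ¬ ∃ Q : Set (Fin n → ℝ), IsIntegralPolytope Q ∧ P = Q + (-Q) := by
  classical
  set i0 : Fin n := ⟨0, by omega⟩ with hi0
  set i1 : Fin n := ⟨1, by omega⟩ with hi1
  have hne : i0 ≠ i1 := by simp [hi0, hi1, Fin.ext_iff]
  set e0 : Fin n → ℝ := Pi.single i0 1 with he0
  set e1 : Fin n → ℝ := Pi.single i1 1 with he1
  set V : Finset (Fin n → ℝ) := {e0, -e0, e1, -e1} with hV
  -- evaluation of the vertices at coordinates i0 and i1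
  have hv01 : ∀ v ∈ (V : Set (Fin n → ℝ)),
      (v i0 = 1 ∧ v i1 = 0) ∨ (v i0 = -1 ∧ v i1 = 0) ∨
      (v i0 = 0 ∧ v i1 = 1) ∨ (v i0 = 0 ∧ v i1 = -1) := by
    intro v hv
    simp only [hV, Finset.coe_insert, Set.mem_insert_iff, Finset.coe_singleton,
      Set.mem_singleton_iff] at hv
    rcases hv with rfl | rfl | rfl | rfl
    · left; constructor
      · simp [he0]
      · simp [he0, Pi.single_eq_of_ne (Ne.symm hne)]
    · right; left; constructor
      · simp [he0]
      · simp [he0, Pi.single_eq_of_ne (Ne.symm hne)]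
    · right; right; left; constructor
      · simp [he1, Pi.single_eq_of_ne hne]
      · simp [he1]
    · right; right; right; constructor
      · simp [he1, Pi.single_eq_of_ne hne]
      · simp [he1]
  refine ⟨convexHull ℝ (V : Set (Fin n → ℝ)), ⟨V, ?_, ?_, rfl⟩, ?_, ?_⟩
  · exact ⟨e0, by simp [hV]⟩
  · -- integrality of the vertices
    intro x hx i
    have hx' := hx
    simp only [hV, Finset.mem_insert, Finset.mem_singleton] at hx'
    rcases hx' with rfl | rfl | rfl | rfl
    · by_cases h : i = i0
      · exact ⟨1, by simp [he0, h]⟩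
      · exact ⟨0, by simp [he0, Pi.single_eq_of_ne h]⟩
    · by_cases h : i = i0
      · exact ⟨-1, by simp [he0, h]⟩
      · exact ⟨0, by simp [he0, Pi.single_eq_of_ne h]⟩
    · by_cases h : i = i1
      · exact ⟨1, by simp [he1, h]⟩
      · exact ⟨0, by simp [he1, Pi.single_eq_of_ne h]⟩
    · by_cases h : i = i1
      · exact ⟨-1, by simp [he1, h]⟩
      · exact ⟨0, by simp [he1, Pi.single_eq_of_ne h]⟩
  · -- symmetry
    have hVneg : (-(V : Set (Fin n → ℝ))) = (V : Set (Fin n → ℝ)) := by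
      ext x
      simp only [Set.mem_neg, hV, Finset.coe_insert, Set.mem_insert_iff,
        Finset.coe_singleton, Set.mem_singleton_iff, neg_eq_iff_eq_neg]
      constructor
      · rintro (h | h | h | h) <;> rw [h] <;> simp <;> tauto
      · rintro (h | h | h | h) <;> rw [h] <;> simp <;> tauto
    calc convexHull ℝ (V : Set (Fin n → ℝ)) = convexHull ℝ (-(V : Set (Fin n → ℝ))) := by
          rw [hVneg]
      _ = -convexHull ℝ (V : Set (Fin n → ℝ)) := convexHull_neg _
  · -- not an integral norm
    rintro ⟨Q, ⟨S, hSne, hSint, rfl⟩, hPQ⟩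
    set P : Set (Fin n → ℝ) := convexHull ℝ (V : Set (Fin n → ℝ)) with hP
    -- linear functionals
    set p0 : (Fin n → ℝ) →ₗ[ℝ] ℝ := LinearMap.proj i0 with hp0
    set p1 : (Fin n → ℝ) →ₗ[ℝ] ℝ := LinearMap.proj i1 with hp1
    -- the eight bounds on P
    have key : ∀ x ∈ P, x i0 ≤ 1 ∧ -1 ≤ x i0 ∧ x i1 ≤ 1 ∧ -1 ≤ x i1 ∧
        x i0 + x i1 ≤ 1 ∧ -1 ≤ x i0 + x i1 ∧ x i0 - x i1 ≤ 1 ∧ -1 ≤ x i0 - x i1 := by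
      intro x hx
      have b1 := hull_linear_le p0 _ 1 (fun v hv => by
        rcases hv01 v hv with ⟨h, _⟩ | ⟨h, _⟩ | ⟨h, _⟩ | ⟨h, _⟩ <;>
          simp [hp0, h]) x hx
      have b2 := hull_linear_le (-p0) _ 1 (fun v hv => by
        rcases hv01 v hv with ⟨h, _⟩ | ⟨h, _⟩ | ⟨h, _⟩ | ⟨h, _⟩ <;>
          simp [hp0, h]) x hx
      have b3 := hull_linear_le p1 _ 1 (fun v hv => by
        rcases hv01 v hv with ⟨_, h⟩ | ⟨_, h⟩ | ⟨_, h⟩ | ⟨_, h⟩ <;>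
          simp [hp1, h]) x hx
      have b4 := hull_linear_le (-p1) _ 1 (fun v hv => by
        rcases hv01 v hv with ⟨_, h⟩ | ⟨_, h⟩ | ⟨_, h⟩ | ⟨_, h⟩ <;>
          simp [hp1, h]) x hx
      have b5 := hull_linear_le (p0 + p1) _ 1 (fun v hv => by
        rcases hv01 v hv with ⟨h, h'⟩ | ⟨h, h'⟩ | ⟨h, h'⟩ | ⟨h, h'⟩ <;>
          simp [hp0, hp1, h, h']) x hx
      have b6 := hull_linear_le (-(p0 + p1)) _ 1 (fun v hv => by
        rcases hv01 v hv with ⟨h, h'⟩ | ⟨h, h'⟩ | ⟨h, h'⟩ | ⟨h, h'⟩ <;>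
          simp [hp0, hp1, h, h']) x hx
      have b7 := hull_linear_le (p0 - p1) _ 1 (fun v hv => by
        rcases hv01 v hv with ⟨h, h'⟩ | ⟨h, h'⟩ | ⟨h, h'⟩ | ⟨h, h'⟩ <;>
          simp [hp0, hp1, h, h']) x hx
      have b8 := hull_linear_le (-(p0 - p1)) _ 1 (fun v hv => by
        rcases hv01 v hv with ⟨h, h'⟩ | ⟨h, h'⟩ | ⟨h, h'⟩ | ⟨h, h'⟩ <;>
          simp [hp0, hp1, h, h']) x hx
      simp only [hp0, hp1, LinearMap.add_apply, LinearMap.sub_apply, LinearMap.neg_apply,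
        LinearMap.proj_apply] at b1 b2 b3 b4 b5 b6 b7 b8
      refine ⟨b1, by linarith, b3, by linarith, b5, by linarith, b7, by linarith⟩
    -- differences of points of S lie in P
    have hdiff : ∀ s ∈ S, ∀ t ∈ S, s - t ∈ P := by
      intro s hs t ht
      have hsQ : s ∈ convexHull ℝ (S : Set (Fin n → ℝ)) := subset_convexHull ℝ _ hs
      have htQ : (-t) ∈ -convexHull ℝ (S : Set (Fin n → ℝ)) := by
        simpa using subset_convexHull ℝ (S : Set (Fin n → ℝ)) ht
      have : s + (-t) ∈ convexHull ℝ (S : Set (Fin n → ℝ)) +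
          (-convexHull ℝ (S : Set (Fin n → ℝ))) := Set.add_mem_add hsQ htQ
      rw [← hPQ] at this
      simpa [sub_eq_add_neg] using this
    -- max/min in coordinate i0
    obtain ⟨smax, hsmax, hsmaxle⟩ := S.exists_max_image (fun x => x i0) hSne
    obtain ⟨smin, hsmin, hsminle⟩ := S.exists_min_image (fun x => x i0) hSne
    obtain ⟨tmax, htmax, htmaxle⟩ := S.exists_max_image (fun x => x i1) hSne
    obtain ⟨tmin, htmin, htminle⟩ := S.exists_min_image (fun x => x i1) hSne
    -- e0 ∈ P gives width ≥ 1 in coordinate i0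
    have he0P : e0 ∈ P := subset_convexHull ℝ _ (by simp [hV])
    have he1P : e1 ∈ P := subset_convexHull ℝ _ (by simp [hV])
    have hwidth0 : smax i0 - smin i0 ≥ 1 := by
      rw [hPQ] at he0P
      obtain ⟨q, hq, r, hr, hqr⟩ := he0P
      rw [Set.mem_neg] at hr
      have hq0 : q i0 ≤ smax i0 :=
        hull_linear_le p0 _ (smax i0) (fun v hv => hsmaxle v hv) q hq
      have hr0 : (-p0) (-r) ≤ -(smin i0) :=
        hull_linear_le (-p0) _ (-(smin i0)) (fun v hv => by
          simpa [hp0] using hsminle v hv) (-r) hr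
      have : q i0 + r i0 = 1 := by
        have := congrFun hqr i0
        simpa [he0] using this
      simp only [hp0, LinearMap.neg_apply, LinearMap.proj_apply, Pi.neg_apply, neg_neg] at hr0
      linarith
    have hwidth1 : tmax i1 - tmin i1 ≥ 1 := by
      rw [hPQ] at he1P
      obtain ⟨q, hq, r, hr, hqr⟩ := he1P
      rw [Set.mem_neg] at hr
      have hq0 : q i1 ≤ tmax i1 :=
        hull_linear_le p1 _ (tmax i1) (fun v hv => htmaxle v hv) q hq
      have hr0 : (-p1) (-r) ≤ -(tmin i1) :=
        hull_linear_le (-p1) _ (-(tmin i1)) (fun v hv => by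
          simpa [hp1] using htminle v hv) (-r) hr
      have : q i1 + r i1 = 1 := by
        have := congrFun hqr i1
        simpa [he1] using this
      simp only [hp1, LinearMap.neg_apply, LinearMap.proj_apply, Pi.neg_apply, neg_neg] at hr0
      linarith
    -- integer coordinates
    obtain ⟨A1, hA1⟩ := hSint smax hsmax i0
    obtain ⟨B1, hB1⟩ := hSint smax hsmax i1
    obtain ⟨A2, hA2⟩ := hSint smin hsmin i0
    obtain ⟨B2, hB2⟩ := hSint smin hsmin i1
    obtain ⟨A3, hA3⟩ := hSint tmax htmax i0
    obtain ⟨B3, hB3⟩ := hSint tmax htmax i1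
    obtain ⟨A4, hA4⟩ := hSint tmin htmin i0
    obtain ⟨B4, hB4⟩ := hSint tmin htmin i1
    -- integer constraints from pairs
    have pairc : ∀ s ∈ S, ∀ t ∈ S, ∀ a b c d : ℤ, s i0 = (a : ℝ) → s i1 = (b : ℝ) →
        t i0 = (c : ℝ) → t i1 = (d : ℝ) →
        a - c ≤ 1 ∧ -1 ≤ a - c ∧ b - d ≤ 1 ∧ -1 ≤ b - d ∧
        (a - c) + (b - d) ≤ 1 ∧ -1 ≤ (a - c) + (b - d) ∧
        (a - c) - (b - d) ≤ 1 ∧ -1 ≤ (a - c) - (b - d) := by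
      intro s hs t ht a b c d ha hb hc hd
      have h := key (s - t) (hdiff s hs t ht)
      simp only [Pi.sub_apply, ha, hb, hc, hd] at h
      obtain ⟨k1, k2, k3, k4, k5, k6, k7, k8⟩ := h
      exact ⟨by exact_mod_cast k1, by exact_mod_cast k2, by exact_mod_cast k3,
        by exact_mod_cast k4, by exact_mod_cast k5, by exact_mod_cast k6,
        by exact_mod_cast k7, by exact_mod_cast k8⟩
    have c12 := pairc smax hsmax smin hsmin A1 B1 A2 B2 hA1 hB1 hA2 hB2
    have c34 := pairc tmax htmax tmin htmin A3 B3 A4 B4 hA3 hB3 hA4 hB4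
    have c13 := pairc smax hsmax tmax htmax A1 B1 A3 B3 hA1 hB1 hA3 hB3
    have c14 := pairc smax hsmax tmin htmin A1 B1 A4 B4 hA1 hB1 hA4 hB4
    have c23 := pairc smin hsmin tmax htmax A2 B2 A3 B3 hA2 hB2 hA3 hB3
    have c24 := pairc smin hsmin tmin htmin A2 B2 A4 B4 hA2 hB2 hA4 hB4
    have hw0 : (1 : ℤ) ≤ A1 - A2 := by
      rw [hA1, hA2] at hwidth0; exact_mod_cast hwidth0
    have hw1 : (1 : ℤ) ≤ B3 - B4 := by
      rw [hB3, hB4] at hwidth1; exact_mod_cast hwidth1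
    omega
end

section
/- The monoid of polytopes in ℝ^n under Minkowski sum has the cancellation property: if P, Q, R are polytopes in ℝ^n (convex hulls of finite sets) and P + Q = P + R as Minkowski sums, then Q = R. -/
open Pointwise

/-- A polytope in `ℝ^n`: the convex hull of a nonempty finite subset of `ℝ^n`. -/
def IsPolytope {n : ℕ} (P : Set (Fin n → ℝ)) : Prop :=
  ∃ S : Finset (Fin n → ℝ), S.Nonempty ∧ P = convexHull ℝ (S : Set (Fin n → ℝ))

/-!
Rådström's argument. If `P + {q} ⊆ P + R` with `R` convex, iterating gives
`P + {k • q} ⊆ P + k • R`, so for a fixed `p₀ ∈ P` we have `p₀ + k • q = p + k • r`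
with `p ∈ P`, `r ∈ R`. Hence `‖q - r‖ = ‖p - p₀‖ / k ≤ diam P / k`, and `q` lies in the
closure of `R`. Polytopes are nonempty, compact and convex, so cancellation follows by
applying this in both directions.
-/

section Cancellation

variable {E : Type*} [NormedAddCommGroup E] [NormedSpace ℝ E] {P Q R : Set E}

theorem Convex.add_natCast_smul_singleton_subset {q : E} (hR : Convex ℝ R)
    (h : P + {q} ⊆ P + R) {k : ℕ} (hk : 0 < k) :
    P + {(k : ℝ) • q} ⊆ P + (k : ℝ) • R := by
  induction k, hk using Nat.le_induction with
  | base => simpa using h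
  | succ k _ ih =>
    calc P + {((k + 1 : ℕ) : ℝ) • q} = P + {q} + {(k : ℝ) • q} := by
          rw [add_assoc, Set.singleton_add_singleton, Nat.cast_succ, add_smul, one_smul,
            add_comm q]
      _ ⊆ P + R + {(k : ℝ) • q} := Set.add_subset_add_right h
      _ = P + {(k : ℝ) • q} + R := add_right_comm _ _ _
      _ ⊆ P + (k : ℝ) • R + R := Set.add_subset_add_right ih
      _ = P + ((k + 1 : ℕ) : ℝ) • R := by
          rw [add_assoc, Nat.cast_succ, hR.add_smul (Nat.cast_nonneg k) zero_le_one, one_smul]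

theorem Convex.subset_of_add_subset_add_left (hR : Convex ℝ R) (hRcl : IsClosed R)
    (hP : P.Nonempty) (hPb : Bornology.IsBounded P) (h : P + Q ⊆ P + R) : Q ⊆ R := by
  intro q hq
  rw [← hRcl.closure_eq, Metric.mem_closure_iff]
  intro ε hε
  obtain ⟨p₀, hp₀⟩ := hP
  obtain ⟨k, hk⟩ := exists_nat_gt (Metric.diam P / ε)
  have hk₀ : (0 : ℝ) < k := (div_nonneg Metric.diam_nonneg hε.le).trans_lt hk
  have hPq : P + {q} ⊆ P + R :=
    (Set.add_subset_add_left (Set.singleton_subset_iff.2 hq)).trans h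
  obtain ⟨p, hp, _, ⟨r, hr, rfl⟩, he⟩ :=
    hR.add_natCast_smul_singleton_subset hPq (Nat.cast_pos.1 hk₀)
      (Set.add_mem_add hp₀ (Set.mem_singleton ((k : ℝ) • q)))
  refine ⟨r, hr, ?_⟩
  have hscaled : (k : ℝ) * dist q r = dist p p₀ := by
    rw [dist_eq_norm, dist_eq_norm, ← Real.norm_of_nonneg hk₀.le, ← norm_smul]
    congr 1
    linear_combination (norm := module) -he
  have hdiam : dist p p₀ ≤ Metric.diam P := Metric.dist_le_diam_of_mem hPb hp hp₀
  rw [div_lt_iff₀ hε] at hk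
  exact lt_of_mul_lt_mul_left ((hscaled.trans_le hdiam).trans_lt hk) hk₀.le

end Cancellation

namespace IsPolytope

variable {n : ℕ} {P : Set (Fin n → ℝ)}

theorem nonempty (hP : IsPolytope P) : P.Nonempty := by
  obtain ⟨S, hS, rfl⟩ := hP
  exact hS.to_set.mono (subset_convexHull ℝ _)

theorem isCompact (hP : IsPolytope P) : IsCompact P := by
  obtain ⟨S, -, rfl⟩ := hP
  exact S.finite_toSet.isCompact_convexHull ℝ

theorem convex (hP : IsPolytope P) : Convex ℝ P := by
  obtain ⟨S, -, rfl⟩ := hP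
  exact convex_convexHull ℝ _

end IsPolytope

/-- The monoid of polytopes in `ℝ^n` under Minkowski sum has the cancellation
property. -/
theorem polytope_minkowski_cancel (n : ℕ) (P Q R : Set (Fin n → ℝ))
    (hP : IsPolytope P) (hQ : IsPolytope Q) (hR : IsPolytope R)
    (h : P + Q = P + R) : Q = R :=
  (hR.convex.subset_of_add_subset_add_left hR.isCompact.isClosed hP.nonempty
      hP.isCompact.isBounded h.subset).antisymm
    (hQ.convex.subset_of_add_subset_add_left hQ.isCompact.isClosed hP.nonempty
      hP.isCompact.isBounded h.superset)
end

section
/- Let P be a symmetric polytope in ℝ^n, let v ∈ ℝ^n, and let H = {x ∈ ℝ^n : ⟨x, v⟩ = 0}. Define the halves P₊ = {x ∈ P : ⟨x, v⟩ ≥ 0} and P₋ = {x ∈ P : ⟨x, v⟩ ≤ 0}. Then P₊ + (-P₊) = P₋ + (-P₋) = P₊ + P₋ = P + (P ∩ H), where all sums are Minkowski sums. -/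
open Pointwise

/-!
Let `f = ⟨·, v⟩`. Symmetry of `P` gives `-P₊ = P₋`, which yields the first two equalities.
For the third, `P₊ + P₋ ⊇ P + (P ∩ H)` is clear, by putting the summand from `P` into the half
that contains it. Conversely, for `a ∈ P₊` and `b ∈ P₋` the segment `[a, b]` crosses `H` at a point
`q = c • a + d • b` with `c + d = 1`, and then `a + b = (d • a + c • b) + q` with both summands in
`P` by convexity.
-/

theorem neg_sep_nonneg_eq_sep_nonpos {𝕜 E : Type*} [Ring 𝕜] [PartialOrder 𝕜]
    [IsOrderedRing 𝕜] [AddCommGroup E] [Module 𝕜 E] {s : Set E} (f : E →ₗ[𝕜] 𝕜)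
    (hs : -s = s) : -{x ∈ s | 0 ≤ f x} = {x ∈ s | f x ≤ 0} := by
  ext x
  simp only [Set.mem_neg, Set.mem_ofPred_eq, map_neg, neg_nonneg]
  rw [← Set.mem_neg, hs]

section HalfSpaces

variable {𝕜 E : Type*} [Field 𝕜] [LinearOrder 𝕜] [IsStrictOrderedRing 𝕜]
  [AddCommGroup E] [Module 𝕜 E] {s : Set E} (f : E →ₗ[𝕜] 𝕜)

theorem Convex.add_mem_add_inter_ker (hs : Convex 𝕜 s) {a b : E} (ha : a ∈ s) (hb : b ∈ s)
    (hfa : 0 ≤ f a) (hfb : f b ≤ 0) : a + b ∈ s + (s ∩ {x | f x = 0}) := by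
  rcases (sub_nonneg.2 (hfb.trans hfa)).eq_or_lt with hgap | hgap
  · have hfa0 : f a = 0 := by linarith
    exact ⟨b, hb, a, ⟨ha, hfa0⟩, add_comm b a⟩
  set c := -f b / (f a - f b)
  set d := f a / (f a - f b)
  have hc : 0 ≤ c := div_nonneg (neg_nonneg.2 hfb) hgap.le
  have hd : 0 ≤ d := div_nonneg hfa hgap.le
  have hcd : c + d = 1 := by
    rw [← add_div, neg_add_eq_sub, div_self hgap.ne']
  have hq : f (c • a + d • b) = 0 := by
    simp only [map_add, map_smul, smul_eq_mul, c, d]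
    field_simp
    ring
  refine ⟨d • a + c • b, hs ha hb hd hc (by rwa [add_comm]), c • a + d • b,
    ⟨hs ha hb hc hd hcd, hq⟩, ?_⟩
  calc d • a + c • b + (c • a + d • b) = (c + d) • a + (c + d) • b := by
        simp only [add_smul]; abel
    _ = a + b := by rw [hcd, one_smul, one_smul]

theorem Convex.sep_nonneg_add_sep_nonpos (hs : Convex 𝕜 s) :
    {x ∈ s | 0 ≤ f x} + {x ∈ s | f x ≤ 0} = s + (s ∩ {x | f x = 0}) := by
  apply Set.Subset.antisymm
  · rintro _ ⟨a, ⟨ha, hfa⟩, b, ⟨hb, hfb⟩, rfl⟩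
    exact hs.add_mem_add_inter_ker f ha hb hfa hfb
  · rintro _ ⟨p, hp, q, ⟨hq, hfq⟩, rfl⟩
    rcases le_total 0 (f p) with hfp | hfp
    · exact ⟨p, ⟨hp, hfp⟩, q, ⟨hq, hfq.le⟩, rfl⟩
    · exact ⟨q, ⟨hq, hfq.ge⟩, p, ⟨hp, hfp⟩, add_comm q p⟩

end HalfSpaces

/-- Normalization by a hyperplane: for a symmetric polytope `P` and a hyperplane
`H = {x : ⟨x,v⟩ = 0}`, the halves `P₊, P₋` satisfy
`P₊ + (-P₊) = P₋ + (-P₋) = P₊ + P₋ = P + (P ∩ H)`. -/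
theorem normalization_by_hyperplane (n : ℕ) (P : Set (Fin n → ℝ))
    (hP : IsPolytope P) (hsym : P = -P) (v : Fin n → ℝ) :
    let H : Set (Fin n → ℝ) := {x | ∑ i, x i * v i = 0}
    let Pp : Set (Fin n → ℝ) := {x ∈ P | 0 ≤ ∑ i, x i * v i}
    let Pm : Set (Fin n → ℝ) := {x ∈ P | ∑ i, x i * v i ≤ 0}
    Pp + (-Pp) = Pm + (-Pm) ∧ Pm + (-Pm) = Pp + Pm ∧ Pp + Pm = P + (P ∩ H) := by
  intro H Pp Pm
  have hconv : Convex ℝ P := by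
    obtain ⟨S, -, rfl⟩ := hP
    exact convex_convexHull ℝ _
  let f : (Fin n → ℝ) →ₗ[ℝ] ℝ := (dotProductBilin ℝ ℝ).flip v
  have hneg : -Pp = Pm := neg_sep_nonneg_eq_sep_nonpos f hsym.symm
  have hneg' : -Pm = Pp := by rw [← hneg, neg_neg]
  refine ⟨?_, ?_, hconv.sep_nonneg_add_sep_nonpos f⟩
  · rw [hneg, hneg', add_comm]
  · rw [hneg', add_comm]
end

section
/- Let P be a convex subset of ℝ^n, let v ∈ ℝ^n, and let H = {x ∈ ℝ^n : ⟨x, v⟩ = 0}. Define P₊ = {x ∈ P : ⟨x, v⟩ ≥ 0} and P₋ = {x ∈ P : ⟨x, v⟩ ≤ 0}. Then the Minkowski sum P₊ + P₋ equals P + (P ∩ H). -/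
open Pointwise

/-- For a convex set `P ⊆ ℝ^n` and the hyperplane `H = {x : ⟨x,v⟩ = 0}`, the
Minkowski sum of the two halves of `P` equals `P + (P ∩ H)`. -/
theorem halves_minkowski_sum_of_convex (n : ℕ) (P : Set (Fin n → ℝ))
    (hP : Convex ℝ P) (v : Fin n → ℝ) :
    let H : Set (Fin n → ℝ) := {x | ∑ i, x i * v i = 0}
    let Pp : Set (Fin n → ℝ) := {x ∈ P | 0 ≤ ∑ i, x i * v i}
    let Pm : Set (Fin n → ℝ) := {x ∈ P | ∑ i, x i * v i ≤ 0}
    Pp + Pm = P + (P ∩ H) := by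
  intro H Pp Pm
  set f : (Fin n → ℝ) → ℝ := fun x => ∑ i, x i * v i with hf
  have hlin : ∀ (s t : ℝ) (a b : Fin n → ℝ),
      f (s • a + t • b) = s * f a + t * f b := by
    intro s t a b
    simp only [hf, Pi.add_apply, Pi.smul_apply, smul_eq_mul, add_mul,
      Finset.sum_add_distrib, Finset.mul_sum, mul_assoc]
  ext x
  simp only [Set.mem_add]
  constructor
  · rintro ⟨a, ⟨haP, hfa⟩, b, ⟨hbP, hfb⟩, rfl⟩
    rcases eq_or_lt_of_le hfb with hb0 | hb0
    · exact ⟨a, haP, b, ⟨hbP, hb0⟩, rfl⟩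
    · have hd : (0:ℝ) < f a - f b := by linarith
      set t : ℝ := f a / (f a - f b) with ht
      have ht0 : 0 ≤ t := div_nonneg hfa hd.le
      have ht1 : t ≤ 1 := by
        rw [ht, div_le_one hd]; linarith
      have h1t : 0 ≤ 1 - t := by linarith
      have hqP : (1 - t) • a + t • b ∈ P := hP haP hbP h1t ht0 (by ring)
      have hpP : t • a + (1 - t) • b ∈ P := hP haP hbP ht0 h1t (by ring)
      have htmul : t * (f a - f b) = f a := div_mul_cancel₀ _ hd.ne'
      have hfq : f ((1 - t) • a + t • b) = 0 := by
        rw [hlin]; nlinarith [htmul]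
      refine ⟨t • a + (1 - t) • b, hpP, (1 - t) • a + t • b, ⟨hqP, hfq⟩, ?_⟩
      module
  · rintro ⟨p, hpP, q, ⟨hqP, hfq⟩, rfl⟩
    have hfq' : f q = 0 := hfq
    rcases le_total 0 (f p) with hp | hp
    · exact ⟨p, ⟨hpP, hp⟩, q, ⟨hqP, hfq'.le⟩, rfl⟩
    · exact ⟨q, ⟨hqP, hfq'.ge⟩, p, ⟨hpP, hp⟩, add_comm q p⟩
end

section
/- Let P be an integral polytope in ℝ^n such that the intersection P ∩ {x ∈ ℝ^n : x_n = 0} is a nonempty integral polytope. Then the half P₊ = {x ∈ P : x_n ≥ 0} is also an integral polytope. -/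
open Pointwise

/-!
Write `P = conv S` and split `S` by the sign of `f = x ↦ xₙ`. A point `x ∈ P` with `f x ≥ 0`
lies on a segment `[y, z]` with `y ∈ conv S₊` and `z ∈ conv S₋`; the segment `[x, z]` meets the
hyperplane `f = 0` in a point `p ∈ P`, and then `x ∈ [y, p]`. Hence
`P₊ = conv (S₊ ∪ (P ∩ {f = 0}))`, and replacing the slice by its integral vertex set gives
integral vertices for `P₊`.
-/

section HalfSpace

variable {𝕜 E : Type*} [Field 𝕜] [LinearOrder 𝕜] [IsStrictOrderedRing 𝕜]
  [AddCommGroup E] [Module 𝕜 E] (f : E →ₗ[𝕜] 𝕜)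

lemma exists_mem_segment_apply_eq_zero {x z : E} (hx : 0 ≤ f x) (hz : f z < 0) :
    ∃ p ∈ segment 𝕜 x z, f p = 0 := by
  have hd : 0 < f x - f z := by linarith
  set t := f x / (f x - f z)
  have ht0 : 0 ≤ t := div_nonneg hx hd.le
  have ht1 : t ≤ 1 := (div_le_one hd).2 (by linarith)
  refine ⟨(1 - t) • x + t • z, ⟨1 - t, t, by linarith, ht0, by ring, rfl⟩, ?_⟩
  simp only [map_add, map_smul, smul_eq_mul, t]
  field_simp
  ring

theorem convexHull_sep_nonneg_eq_convexHull_union (s : Set E) :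
    {x ∈ convexHull 𝕜 s | 0 ≤ f x} =
      convexHull 𝕜 ({x ∈ s | 0 ≤ f x} ∪ (convexHull 𝕜 s ∩ {x | f x = 0})) := by
  have hhalf : Convex 𝕜 {x | 0 ≤ f x} := convex_halfSpace_ge f.isLinear 0
  refine subset_antisymm ?_ (convexHull_min ?_ ((convex_convexHull 𝕜 s).inter hhalf))
  · rintro x ⟨hxs, hx⟩
    set pos := {x ∈ s | 0 ≤ f x}
    set neg := {x ∈ s | f x < 0}
    have hneg : convexHull 𝕜 neg ⊆ {x | f x < 0} :=
      convexHull_min (fun _ h ↦ h.2) (convex_halfSpace_lt f.isLinear 0)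
    have hs : s = pos ∪ neg := by
      ext y
      by_cases 0 ≤ f y <;> simp_all [pos, neg]
    rcases neg.eq_empty_or_nonempty with hnegE | hnegN
    · rw [hs, hnegE, Set.union_empty] at hxs
      exact convexHull_mono Set.subset_union_left hxs
    rcases pos.eq_empty_or_nonempty with hposE | hposN
    · rw [hs, hposE, Set.empty_union] at hxs
      exact absurd hx (not_le.2 (hneg hxs))
    have hjoin : x ∈ convexJoin 𝕜 (convexHull 𝕜 pos) (convexHull 𝕜 neg) := by
      rwa [← convexHull_union hposN hnegN, ← hs]
    obtain ⟨y, hy, z, hz, hxyz⟩ := mem_convexJoin.1 hjoin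
    obtain ⟨p, hp, hp0⟩ := exists_mem_segment_apply_eq_zero f hx (hneg hz)
    have hp_slice : p ∈ convexHull 𝕜 s ∩ {x | f x = 0} :=
      ⟨(convex_convexHull 𝕜 s).segment_subset hxs (convexHull_mono (fun _ h ↦ h.1) hz) hp, hp0⟩
    have hxyp : x ∈ segment 𝕜 y p :=
      (mem_segment_iff_wbtw.1 hxyz |>.trans_right_left (mem_segment_iff_wbtw.1 hp)).mem_segment
    exact (convex_convexHull 𝕜 _).segment_subset (convexHull_mono Set.subset_union_left hy)
      (subset_convexHull 𝕜 _ (Set.mem_union_right _ hp_slice)) hxyp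
  · rintro x (⟨hxs, hx⟩ | ⟨hxs, hx⟩)
    · exact ⟨subset_convexHull 𝕜 s hxs, hx⟩
    · exact ⟨hxs, hx.ge⟩

end HalfSpace

theorem half_of_integral_polytope_general (n : ℕ) (P : Set (Fin (n + 1) → ℝ))
    (hP : IsIntegralPolytope P)
    (hslice : IsIntegralPolytope (P ∩ {x : Fin (n + 1) → ℝ | x (Fin.last n) = 0})) :
    IsIntegralPolytope {x ∈ P | 0 ≤ x (Fin.last n)} := by
  obtain ⟨S, -, hS, rfl⟩ := hP
  obtain ⟨T, hTne, hT, hslice⟩ := hslice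
  refine ⟨S.filter (fun x ↦ 0 ≤ x (Fin.last n)) ∪ T, hTne.mono Finset.subset_union_right, ?_, ?_⟩
  · simp only [Finset.mem_union, Finset.mem_filter]
    rintro x (⟨hx, -⟩ | hx)
    exacts [hS x hx, hT x hx]
  · refine (convexHull_sep_nonneg_eq_convexHull_union (LinearMap.proj (R := ℝ) (Fin.last n))
      (S : Set (Fin (n + 1) → ℝ))).trans ?_
    rw [LinearMap.coe_proj, hslice, convexHull_convexHull_union_right, Finset.coe_union,
      Finset.coe_filter]
    rfl

/-- If `P` is an integral polytope in `ℝ^(n+1)` whose intersection with the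
hyperplane `{xₙ = 0}` is a nonempty integral polytope, then the half
`P₊ = {x ∈ P : xₙ ≥ 0}` is also an integral polytope. -/
theorem half_of_integral_polytope (n : ℕ) (P : Set (Fin (n + 1) → ℝ))
    (hP : IsIntegralPolytope P)
    (hne : (P ∩ {x : Fin (n + 1) → ℝ | x (Fin.last n) = 0}).Nonempty)
    (hslice : IsIntegralPolytope (P ∩ {x : Fin (n + 1) → ℝ | x (Fin.last n) = 0})) :
    IsIntegralPolytope {x ∈ P | 0 ≤ x (Fin.last n)} :=
  half_of_integral_polytope_general n P hP hslice
end
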